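/- arXiv:1405.3271 — 5 statements merged into one kernel-verified Lean document; each statement's English description precedes it below -/
import Mathlib

section
/- Let G be a finite graph with at least one perfect matching and with maximum degree at most d. Then for every edge e of G, the probability that a uniformly chosen random matching of G contains e is at least 1/(d²+1). -/
/-! Fix the edge `e = s(u, v)`. Sending a matching `M` to the matching obtained by deleting the
edges of `M` at `u` and `v` and inserting `e` lands in the matchings containing `e`, and `M` is
recovered from its image together with the edges of `M` at `u` and at `v`. Those are either both
`e`, or each is absent or one of the at most `d - 1` other edges at its endpoint, so at most
`d² + 1` matchings share an image. -/

open Classical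

/-- `M` is a matching of `G`: a set of edges of `G` that are pairwise disjoint. -/
def IsMatchingSet {V : Type*} (G : SimpleGraph V) (M : Finset (Sym2 V)) : Prop :=
  (∀ e ∈ M, e ∈ G.edgeSet) ∧
    ∀ e ∈ M, ∀ f ∈ M, e ≠ f → ∀ v : V, ¬(v ∈ e ∧ v ∈ f)

/-- A perfect matching: a matching covering every vertex. -/
def IsPerfectMatchingSet {V : Type*} (G : SimpleGraph V) (M : Finset (Sym2 V)) : Prop :=
  IsMatchingSet G M ∧ ∀ v : V, ∃ e ∈ M, v ∈ e

section

open Finset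

variable {V : Type*} {G : SimpleGraph V} {M M' : Finset (Sym2 V)} {u v : V}

lemma IsMatchingSet.eq_of_mem_of_mem (hM : IsMatchingSet G M) {f g : Sym2 V} (hf : f ∈ M)
    (hg : g ∈ M) {w : V} (hwf : w ∈ f) (hwg : w ∈ g) : f = g := by
  by_contra h
  exact hM.2 f hf g hg h w ⟨hwf, hwg⟩

lemma isMatchingSet_singleton {e : Sym2 V} (he : e ∈ G.edgeSet) : IsMatchingSet G {e} := by
  refine ⟨fun f hf => mem_singleton.mp hf ▸ he, fun f hf g hg hfg => ?_⟩
  rw [mem_singleton] at hf hg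
  exact absurd (hf.trans hg.symm) hfg

lemma IsMatchingSet.subset {N : Finset (Sym2 V)} (hM : IsMatchingSet G M) (hNM : N ⊆ M) :
    IsMatchingSet G N :=
  ⟨fun f hf => hM.1 f (hNM hf), fun f hf g hg => hM.2 f (hNM hf) g (hNM hg)⟩

lemma IsMatchingSet.insert {e : Sym2 V} (hM : IsMatchingSet G M) (he : e ∈ G.edgeSet)
    (hfree : ∀ f ∈ M, ∀ w ∈ e, w ∉ f) : IsMatchingSet G (insert e M) := by
  refine ⟨fun f hf => (mem_insert.mp hf).elim (· ▸ he) (hM.1 f), ?_⟩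
  rintro f hf g hg hfg w ⟨hwf, hwg⟩
  rcases mem_insert.mp hf with rfl | hfM <;> rcases mem_insert.mp hg with rfl | hgM
  · exact hfg rfl
  · exact hfree g hgM w hwf hwg
  · exact hfree f hfM w hwg hwf
  · exact hM.2 f hfM g hgM hfg w ⟨hwf, hwg⟩

noncomputable def edgeAt (u : V) (M : Finset (Sym2 V)) : Option (Sym2 V) :=
  if h : ∃ f ∈ M, u ∈ f then some h.choose else none

lemma IsMatchingSet.edgeAt_eq_some_iff (hM : IsMatchingSet G M) {f : Sym2 V} :
    edgeAt u M = some f ↔ f ∈ M ∧ u ∈ f := by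
  unfold edgeAt
  split_ifs with h
  · obtain ⟨hmem, hu⟩ := h.choose_spec
    refine ⟨fun hf => Option.some_inj.mp hf ▸ ⟨hmem, hu⟩, fun ⟨hf, huf⟩ => ?_⟩
    exact congrArg some (hM.eq_of_mem_of_mem hmem hf hu huf)
  · simp only [false_iff]
    exact fun hf => h ⟨f, hf⟩

noncomputable def forceEdge (u v : V) (M : Finset (Sym2 V)) : Finset (Sym2 V) :=
  insert s(u, v) (M.filter fun f => ¬(u ∈ f ∨ v ∈ f))

lemma mem_forceEdge_self : s(u, v) ∈ forceEdge u v M := mem_insert_self _ _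

lemma isMatchingSet_forceEdge (hM : IsMatchingSet G M) (huv : G.Adj u v) :
    IsMatchingSet G (forceEdge u v M) := by
  refine (hM.subset (filter_subset _ M)).insert huv fun f hf w hw hwf => ?_
  have hfree := (mem_filter.mp hf).2
  rcases Sym2.mem_iff.mp hw with rfl | rfl
  exacts [hfree (Or.inl hwf), hfree (Or.inr hwf)]

lemma IsMatchingSet.subset_of_forceEdge_eq (hM : IsMatchingSet G M) (hM' : IsMatchingSet G M')
    (hforce : forceEdge u v M = forceEdge u v M') (hu : edgeAt u M = edgeAt u M')
    (hv : edgeAt v M = edgeAt v M') : M ⊆ M' := by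
  intro f hf
  by_cases hat : u ∈ f ∨ v ∈ f
  · rcases hat with huf | hvf
    · exact (hM'.edgeAt_eq_some_iff.mp (hu ▸ hM.edgeAt_eq_some_iff.mpr ⟨hf, huf⟩)).1
    · exact (hM'.edgeAt_eq_some_iff.mp (hv ▸ hM.edgeAt_eq_some_iff.mpr ⟨hf, hvf⟩)).1
  · have hforced : f ∈ forceEdge u v M' :=
      hforce ▸ mem_insert_of_mem (mem_filter.mpr ⟨hf, hat⟩)
    rcases mem_insert.mp hforced with rfl | hfM'
    · exact absurd (Or.inl (Sym2.mem_mk_left u v)) hat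
    · exact (mem_filter.mp hfM').1

lemma IsMatchingSet.edgeAt_mem_insertNone [Fintype V] (hM : IsMatchingSet G M) {e : Sym2 V}
    (he : e ∉ M) : edgeAt u M ∈ insertNone ((G.incidenceFinset u).erase e) := by
  refine mem_insertNone.mpr fun f hf => ?_
  obtain ⟨hfM, huf⟩ := hM.edgeAt_eq_some_iff.mp hf
  refine mem_erase.mpr ⟨fun hfe => he (hfe ▸ hfM), ?_⟩
  exact (G.mem_incidenceFinset u f).mpr ⟨hM.1 f hfM, huf⟩

lemma card_insertNone_incidenceFinset_erase [Fintype V] (huv : G.Adj u v) :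
    #(insertNone ((G.incidenceFinset u).erase s(u, v))) = G.degree u := by
  have he : s(u, v) ∈ G.incidenceFinset u :=
    (G.mem_incidenceFinset u _).mpr ⟨huv, Sym2.mem_mk_left u v⟩
  rw [card_insertNone, card_erase_of_mem he, G.card_incidenceFinset_eq_degree]
  exact Nat.sub_add_cancel (G.degree_pos_iff_exists_adj u |>.mpr ⟨v, huv⟩)

end

-- Outside `open Finset`, where `{M | p M}` would elaborate to a `Finset` rather than a `Set`.
lemma ncard_matchings_le {V : Type*} [Fintype V] {G : SimpleGraph V} {u v : V}
    (huv : G.Adj u v) :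
    {M : Finset (Sym2 V) | IsMatchingSet G M}.ncard ≤
      (G.degree u * G.degree v + 1) * {M | IsMatchingSet G M ∧ s(u, v) ∈ M}.ncard := by
  set traces : Finset (Option (Sym2 V) × Option (Sym2 V)) :=
    insert (some s(u, v), some s(u, v))
      (Finset.insertNone ((G.incidenceFinset u).erase s(u, v)) ×ˢ
        Finset.insertNone ((G.incidenceFinset v).erase s(u, v)))
  have htraces : traces.card ≤ G.degree u * G.degree v + 1 := by
    refine (Finset.card_insert_le _ _).trans (le_of_eq ?_)
    rw [Finset.card_product, card_insertNone_incidenceFinset_erase huv, Sym2.eq_swap,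
      card_insertNone_incidenceFinset_erase huv.symm]
  have hmaps : ∀ M ∈ {M : Finset (Sym2 V) | IsMatchingSet G M},
      (forceEdge u v M, edgeAt u M, edgeAt v M) ∈
        {M | IsMatchingSet G M ∧ s(u, v) ∈ M} ×ˢ (traces : Set _) := by
    intro M hM
    refine ⟨⟨isMatchingSet_forceEdge hM huv, mem_forceEdge_self⟩, ?_⟩
    by_cases he : s(u, v) ∈ M
    · have hu := hM.edgeAt_eq_some_iff.mpr ⟨he, Sym2.mem_mk_left u v⟩
      have hv := hM.edgeAt_eq_some_iff.mpr ⟨he, Sym2.mem_mk_right u v⟩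
      rw [Finset.mem_coe, hu, hv]
      exact Finset.mem_insert_self _ _
    · exact Finset.mem_insert_of_mem
        (Finset.mem_product.mpr ⟨hM.edgeAt_mem_insertNone he, hM.edgeAt_mem_insertNone he⟩)
  have hinj : Set.InjOn (fun M => (forceEdge u v M, edgeAt u M, edgeAt v M))
      {M : Finset (Sym2 V) | IsMatchingSet G M} := by
    intro M hM M' hM' h
    simp only [Prod.mk.injEq] at h
    obtain ⟨hforce, hu, hv⟩ := h
    exact (hM.subset_of_forceEdge_eq hM' hforce hu hv).antisymm
      (hM'.subset_of_forceEdge_eq hM hforce.symm hu.symm hv.symm)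
  calc _ ≤ ({M | IsMatchingSet G M ∧ s(u, v) ∈ M} ×ˢ (traces : Set _)).ncard :=
        Set.ncard_le_ncard_of_injOn _ hmaps hinj
    _ = _ * traces.card := by rw [Set.ncard_prod, Set.ncard_coe_finset]
    _ ≤ _ := by rw [mul_comm]; gcongr

theorem prob_edge_in_random_matching_general {V : Type*} [Fintype V] (G : SimpleGraph V) (d : ℕ)
    (hdeg : ∀ v : V, (G.neighborSet v).ncard ≤ d)
    (e : Sym2 V) (he : e ∈ G.edgeSet) :
    (1 : ℝ) / ((d : ℝ) ^ 2 + 1) ≤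
      (({M : Finset (Sym2 V) | IsMatchingSet G M ∧ e ∈ M}.ncard : ℝ) /
        ({M : Finset (Sym2 V) | IsMatchingSet G M}.ncard : ℝ)) := by
  obtain ⟨u, v⟩ := e
  have hdegree (w : V) : G.degree w ≤ d := by
    rw [← G.card_neighborSet_eq_degree, ← Nat.card_eq_fintype_card, Nat.card_coe_set_eq]
    exact hdeg w
  have hcount : {M : Finset (Sym2 V) | IsMatchingSet G M}.ncard ≤
      (d ^ 2 + 1) * {M | IsMatchingSet G M ∧ s(u, v) ∈ M}.ncard := by
    refine (ncard_matchings_le he).trans (Nat.mul_le_mul_right _ ?_)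
    rw [sq]
    gcongr <;> exact hdegree _
  have hpos : 0 < {M : Finset (Sym2 V) | IsMatchingSet G M}.ncard :=
    (Set.ncard_pos).mpr ⟨{s(u, v)}, isMatchingSet_singleton he⟩
  rw [div_le_div_iff₀ (by positivity) (by exact_mod_cast hpos), one_mul, mul_comm]
  exact_mod_cast hcount

/-- For a graph of maximum degree at most `d` (admitting a perfect matching),
a uniform random matching contains a given edge `e` with probability at least `1/(d²+1)`. -/
theorem prob_edge_in_random_matching {V : Type*} [Fintype V] (G : SimpleGraph V) (d : ℕ)
    (hdeg : ∀ v : V, (G.neighborSet v).ncard ≤ d)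
    (hpm : ∃ M : Finset (Sym2 V), IsPerfectMatchingSet G M)
    (e : Sym2 V) (he : e ∈ G.edgeSet) :
    (1 : ℝ) / ((d : ℝ) ^ 2 + 1) ≤
      (({M : Finset (Sym2 V) | IsMatchingSet G M ∧ e ∈ M}.ncard : ℝ) /
        ({M : Finset (Sym2 V) | IsMatchingSet G M}.ncard : ℝ)) :=
  prob_edge_in_random_matching_general G d hdeg e he
end

section
/- Let G=(U,V,E) be a bipartite δ-expander graph and M a perfect matching of G. Define the digraph Ḡ on vertex set V with an edge (x,y) whenever there is u∈U with (x,u)∈M and (u,y)∈E(G). Then Ḡ is a δ-expander digraph. -/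
/-- A bipartite graph (edge relation `E : U → V → Prop`) is a `δ`-expander if every
subset of either side of size at most half that side expands by a factor `1+δ`. -/
def IsBipartiteExpander {U V : Type*} [Fintype U] [Fintype V] (E : U → V → Prop)
    (δ : ℝ) : Prop :=
  (∀ S : Set U, (S.ncard : ℝ) ≤ (Fintype.card U : ℝ) / 2 →
    (1 + δ) * (S.ncard : ℝ) ≤ ({v : V | ∃ u ∈ S, E u v}.ncard : ℝ)) ∧
  (∀ S : Set V, (S.ncard : ℝ) ≤ (Fintype.card V : ℝ) / 2 →
    (1 + δ) * (S.ncard : ℝ) ≤ ({u : U | ∃ v ∈ S, E u v}.ncard : ℝ))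

/-- A digraph is a `δ`-expander if every vertex set `S` with `|S| ≤ |V|/2` satisfies
`|N_out(S)| ≥ (1+δ)|S|` and `|N_in(S)| ≥ (1+δ)|S|`. -/
def IsDigraphExpander {V : Type*} [Fintype V] (R : V → V → Prop) (δ : ℝ) : Prop :=
  ∀ S : Set V, (S.ncard : ℝ) ≤ (Fintype.card V : ℝ) / 2 →
    (1 + δ) * (S.ncard : ℝ) ≤ ({v : V | ∃ s ∈ S, R s v}.ncard : ℝ) ∧
    (1 + δ) * (S.ncard : ℝ) ≤ ({v : V | ∃ s ∈ S, R v s}.ncard : ℝ)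

/-- If `G = (U,V,E)` is a bipartite `δ`-expander and `M` is a perfect matching of `G`,
then the digraph `Ḡ` on `V` with edge `(x,y)` whenever the vertex `u = M⁻¹(x)` matched
to `x` satisfies `E u y`, is a `δ`-expander digraph. -/
theorem digraph_of_matching_is_expander {U V : Type*} [Fintype U] [Fintype V]
    (E : U → V → Prop) (δ : ℝ) (hδ : 0 < δ)
    (hexp : IsBipartiteExpander E δ)
    (M : U ≃ V) (hM : ∀ u : U, E u (M u)) :
    IsDigraphExpander (fun x y : V => E (M.symm x) y) δ := by
  intro S hS
  have hcard : Fintype.card U = Fintype.card V := Fintype.card_congr M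
  constructor
  · have h := hexp.1 (M.symm '' S) ?_
    · have himg : (M.symm '' S).ncard = S.ncard :=
        Set.ncard_image_of_injective _ M.symm.injective
      have hset : {v : V | ∃ u ∈ M.symm '' S, E u v}
          = {v : V | ∃ s ∈ S, E (M.symm s) v} := by
        ext v
        simp only [Set.mem_setOf_eq, Set.mem_image]
        constructor
        · rintro ⟨u, ⟨s, hs, rfl⟩, hE⟩
          exact ⟨s, hs, hE⟩
        · rintro ⟨s, hs, hE⟩
          exact ⟨M.symm s, ⟨s, hs, rfl⟩, hE⟩
      rw [himg, hset] at h
      exact h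
    · rw [Set.ncard_image_of_injective _ M.symm.injective, hcard]
      exact hS
  · have h := hexp.2 S (by exact hS)
    have hset : {v : V | ∃ s ∈ S, E (M.symm v) s}
        = M '' {u : U | ∃ v ∈ S, E u v} := by
      ext v
      simp only [Set.mem_setOf_eq, Set.mem_image]
      constructor
      · rintro ⟨s, hs, hE⟩
        exact ⟨M.symm v, ⟨s, hs, hE⟩, M.apply_symm_apply v⟩
      · rintro ⟨u, ⟨s, hs, hE⟩, rfl⟩
        rw [M.symm_apply_apply]
        exact ⟨s, hs, hE⟩
    rw [hset, Set.ncard_image_of_injective _ M.injective]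
    exact h
end

section
/- Let G be a bipartite δ-expander graph on 2n vertices (n ≥ 2) with a perfect matching M. Then every edge of G lies on an M-alternating cycle of length at most 2 + 4·ln(n)/ln(1+δ). -/
section Chains

variable {α : Type*}

/-- A chain of length `k` from `a` to `b` along relation `R`. -/
def RChain (R : α → α → Prop) (k : ℕ) (a b : α) : Prop :=
  ∃ f : ℕ → α, f 0 = a ∧ f k = b ∧ ∀ i < k, R (f i) (f (i + 1))

lemma rchain_zero {R : α → α → Prop} {a b : α} (h : RChain R 0 a b) : a = b := by
  obtain ⟨f, h0, hk, -⟩ := h; rw [← h0, ← hk]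

lemma rchain_const {R : α → α → Prop} (hrefl : ∀ a, R a a) (k : ℕ) (a : α) :
    RChain R k a a := ⟨fun _ => a, rfl, rfl, fun _ _ => hrefl a⟩

lemma rchain_succ {R : α → α → Prop} {k : ℕ} {a b c : α} (h : RChain R k a b) (hbc : R b c) :
    RChain R (k + 1) a c := by
  obtain ⟨f, h0, hk, hstep⟩ := h
  refine ⟨fun t => if t ≤ k then f t else c, by simp [h0], by simp, fun i hi => ?_⟩
  dsimp only
  rcases lt_or_eq_of_le (Nat.lt_succ_iff.mp hi) with hik | rfl
  · rw [if_pos hik.le, if_pos (Nat.succ_le_of_lt hik)]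
    exact hstep i hik
  · rw [if_pos le_rfl, if_neg (by omega), hk]; exact hbc

lemma rchain_trans {R : α → α → Prop} {k l : ℕ} {a b c : α}
    (h : RChain R k a b) (h' : RChain R l b c) : RChain R (k + l) a c := by
  obtain ⟨f, h0, hk, hstep⟩ := h
  obtain ⟨g, g0, gl, gstep⟩ := h'
  refine ⟨fun t => if t ≤ k then f t else g (t - k), by simp [h0], ?_, fun i hi => ?_⟩
  · dsimp only
    rcases Nat.eq_zero_or_pos l with rfl | hl
    · rw [if_pos (by omega : k + 0 ≤ k)]
      simpa [hk, gl] using g0.symm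
    · rw [if_neg (by omega)]
      have : k + l - k = l := by omega
      rw [this, gl]
  · dsimp only
    rcases lt_trichotomy i k with hik | hik | hik
    · rw [if_pos hik.le, if_pos (Nat.succ_le_of_lt hik)]
      exact hstep i hik
    · rw [hik]
      rw [if_pos le_rfl, if_neg (by omega), hk, ← g0]
      have : k + 1 - k = 1 := by omega
      rw [this]
      exact gstep 0 (by omega)
    · rw [if_neg (by omega), if_neg (by omega)]
      have h1 : i + 1 - k = (i - k) + 1 := by omega
      rw [h1]
      exact gstep (i - k) (by omega)

lemma rchain_reverse {R : α → α → Prop} {k : ℕ} {a b : α} (h : RChain R k a b) :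
    RChain (flip R) k b a := by
  obtain ⟨f, h0, hk, hstep⟩ := h
  refine ⟨fun t => f (k - t), by simp [hk], by simp [h0], fun i hi => ?_⟩
  show R (f (k - (i + 1))) (f (k - i))
  have : k - i = (k - (i + 1)) + 1 := by omega
  rw [this]
  exact hstep _ (by omega)

/-- A minimal-length chain can be chosen with pairwise-distinct vertices. -/
lemma exists_injective_chain {R : α → α → Prop} {a b : α} {K : ℕ} (h : RChain R K a b) :
    ∃ ℓ ≤ K, ∃ f : ℕ → α, f 0 = a ∧ f ℓ = b ∧ (∀ i < ℓ, R (f i) (f (i + 1))) ∧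
      ∀ i ≤ ℓ, ∀ j ≤ ℓ, f i = f j → i = j := by
  have hex : ∃ k, RChain R k a b := ⟨K, h⟩
  classical
  set ℓ := Nat.find hex with hℓdef
  obtain ⟨f, h0, hk, hstep⟩ : RChain R ℓ a b := Nat.find_spec hex
  refine ⟨ℓ, Nat.find_le h, f, h0, hk, hstep, ?_⟩
  have key : ∀ i j, i < j → j ≤ ℓ → f i ≠ f j := by
    intro i j hij hjl hfij
    set d := j - i with hd
    have hd1 : 1 ≤ d := by omega
    have hcon : RChain R (ℓ - d) a b := by
      refine ⟨fun t => if t ≤ i then f t else f (t + d), by simp [h0], ?_, fun t ht => ?_⟩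
      · dsimp only
        by_cases hcase : ℓ - d ≤ i
        · have hji : ℓ = j := by omega
          have : ℓ - d = i := by omega
          rw [this, if_pos le_rfl, hfij, ← hji, hk]
        · rw [if_neg hcase]
          have : ℓ - d + d = ℓ := by omega
          rw [this, hk]
      · dsimp only
        rcases lt_trichotomy t i with hti | hti | hti
        · rw [if_pos hti.le, if_pos (by omega)]
          exact hstep t (by omega)
        · rw [hti]
          rw [if_pos le_rfl, if_neg (by omega), hfij]
          have : i + 1 + d = j + 1 := by omega
          rw [this]
          exact hstep j (by omega)
        · rw [if_neg (by omega), if_neg (by omega)]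
          have : t + 1 + d = (t + d) + 1 := by omega
          rw [this]
          exact hstep (t + d) (by omega)
    have : ℓ ≤ ℓ - d := Nat.find_le hcon
    omega
  intro i hi j hj hfij
  rcases lt_trichotomy i j with hlt | heq | hlt
  · exact absurd hfij (key i j hlt hj)
  · exact heq
  · exact absurd hfij.symm (key j i hlt hi)

end Chains

section Balls

variable {α : Type*} [Fintype α]

def rball (R : α → α → Prop) (a : α) (k : ℕ) : Set α := {b | RChain R k a b}

lemma self_mem_rball {R : α → α → Prop} (hrefl : ∀ a, R a a) (a : α) (k : ℕ) :
    a ∈ rball R a k := rchain_const hrefl k a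

lemma rball_mono {R : α → α → Prop} (hrefl : ∀ a, R a a) (a : α) (k : ℕ) :
    rball R a k ⊆ rball R a (k + 1) :=
  fun b hb => rchain_succ hb (hrefl b)

lemma one_le_ncard_rball {R : α → α → Prop} (hrefl : ∀ a, R a a) (a : α) (k : ℕ) :
    1 ≤ (rball R a k).ncard :=
  (Set.ncard_pos (Set.toFinite _)).mpr ⟨a, self_mem_rball hrefl a k⟩

lemma rball_growth {R : α → α → Prop} {δ : ℝ}
    (H : ∀ S : Set α, (S.ncard : ℝ) ≤ (Fintype.card α : ℝ) / 2 →
      (1 + δ) * (S.ncard : ℝ) ≤ ({b | ∃ a ∈ S, R a b}.ncard : ℝ))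
    (a : α) (k : ℕ) (hk : ((rball R a k).ncard : ℝ) ≤ (Fintype.card α : ℝ) / 2) :
    (1 + δ) * ((rball R a k).ncard : ℝ) ≤ ((rball R a (k + 1)).ncard : ℝ) := by
  refine (H _ hk).trans ?_
  have hsub : {b | ∃ a' ∈ rball R a k, R a' b} ⊆ rball R a (k + 1) := by
    rintro b ⟨a', ha', hab⟩
    exact rchain_succ ha' hab
  exact_mod_cast Set.ncard_le_ncard hsub (Set.toFinite _)

lemma exists_big_rball {R : α → α → Prop} (hrefl : ∀ a, R a a) {δ : ℝ} (hδ : 0 < δ)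
    (H : ∀ S : Set α, (S.ncard : ℝ) ≤ (Fintype.card α : ℝ) / 2 →
      (1 + δ) * (S.ncard : ℝ) ≤ ({b | ∃ a ∈ S, R a b}.ncard : ℝ))
    (a : α) (hcard : 2 ≤ Fintype.card α) :
    ∃ k : ℕ, ((1 + δ : ℝ)) ^ k ≤ (Fintype.card α : ℝ) ∧
      (Fintype.card α : ℝ) < 2 * ((rball R a k).ncard : ℝ) := by
  classical
  set n := Fintype.card α with hn
  -- every ball has size at most n
  have hle : ∀ k, (rball R a k).ncard ≤ n := by
    intro k
    simpa [hn, Set.ncard_univ] using Set.ncard_le_ncard (Set.subset_univ (rball R a k))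
      (Set.toFinite _)
  -- strict growth while small
  have hgrow : ∀ k, ((rball R a k).ncard : ℝ) ≤ (n : ℝ) / 2 →
      (rball R a k).ncard < (rball R a (k + 1)).ncard := by
    intro k hk
    have h1 := rball_growth H a k hk
    have h2 : (1 : ℝ) ≤ ((rball R a k).ncard : ℝ) := by
      exact_mod_cast one_le_ncard_rball hrefl a k
    have : ((rball R a k).ncard : ℝ) < ((rball R a (k + 1)).ncard : ℝ) := by nlinarith
    exact_mod_cast this
  -- exists a ball bigger than n/2
  have hP : ∃ k, (n : ℝ) < 2 * ((rball R a k).ncard : ℝ) := by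
    have main : ∀ k : ℕ, (n : ℝ) < 2 * ((rball R a k).ncard : ℝ) ∨
        k + 1 ≤ (rball R a k).ncard := by
      intro k
      induction k with
      | zero => exact Or.inr (one_le_ncard_rball hrefl a 0)
      | succ k ih =>
        rcases ih with h | h
        · left
          have hmono : (rball R a k).ncard ≤ (rball R a (k + 1)).ncard :=
            Set.ncard_le_ncard (rball_mono hrefl a k) (Set.toFinite _)
          have : ((rball R a k).ncard : ℝ) ≤ ((rball R a (k + 1)).ncard : ℝ) := by
            exact_mod_cast hmono
          linarith
        · by_cases hsmall : ((rball R a k).ncard : ℝ) ≤ (n : ℝ) / 2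
          · right
            have := hgrow k hsmall
            omega
          · left
            push_neg at hsmall
            have hmono : (rball R a k).ncard ≤ (rball R a (k + 1)).ncard :=
              Set.ncard_le_ncard (rball_mono hrefl a k) (Set.toFinite _)
            have : ((rball R a k).ncard : ℝ) ≤ ((rball R a (k + 1)).ncard : ℝ) := by
              exact_mod_cast hmono
            linarith
      
    rcases main n with h | h
    · exact ⟨n, h⟩
    · exact absurd (hle n) (by omega)
  classical
  set k := Nat.find hP with hkdef
  refine ⟨k, ?_, Nat.find_spec hP⟩
  -- lower bound on balls below k
  have hsmall : ∀ j < k, ((rball R a j).ncard : ℝ) ≤ (n : ℝ) / 2 := by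
    intro j hj
    have := Nat.find_min hP hj
    push_neg at this
    linarith
  have hpow : ∀ j ≤ k, j < k → ((1 + δ : ℝ)) ^ j ≤ ((rball R a j).ncard : ℝ) := by
    intro j _ hj
    induction j with
    | zero =>
      have h := one_le_ncard_rball hrefl a 0
      have h' : (1 : ℝ) ≤ ((rball R a 0).ncard : ℝ) := by exact_mod_cast h
      simpa using h'
    | succ j ih =>
      have hjk : j < k := by omega
      have h1 := ih (by omega) hjk
      have h2 := rball_growth H a j (hsmall j hjk)
      have hpos : (0 : ℝ) < 1 + δ := by linarith
      calc ((1 + δ : ℝ)) ^ (j + 1) = (1 + δ) * (1 + δ) ^ j := by ring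
        _ ≤ (1 + δ) * ((rball R a j).ncard : ℝ) := by nlinarith
        _ ≤ _ := h2
  -- k ≥ 1
  rcases Nat.eq_zero_or_pos k with hk0 | hk1
  · exfalso
    have hspec := Nat.find_spec hP
    rw [← hkdef, hk0] at hspec
    have hball0 : rball R a 0 = {a} := by
      ext b
      constructor
      · intro hb
        exact ((rchain_zero hb).symm : b = a)
      · intro hb
        rw [hb]
        exact self_mem_rball hrefl a 0
    rw [hball0] at hspec
    simp [Set.ncard_singleton] at hspec
    have : (2 : ℝ) ≤ (n : ℝ) := by exact_mod_cast hcard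
    linarith
  · have hk1' : k - 1 < k := by omega
    have h1 := hpow (k - 1) (by omega) hk1'
    have h2 := rball_growth H a (k - 1) (hsmall (k - 1) hk1')
    have h3 : ((rball R a ((k - 1) + 1)).ncard : ℝ) ≤ (n : ℝ) := by
      exact_mod_cast hle ((k - 1) + 1)
    have hpos : (0 : ℝ) < 1 + δ := by linarith
    have hk' : (k - 1) + 1 = k := by omega
    calc ((1 + δ : ℝ)) ^ k = (1 + δ) * (1 + δ) ^ (k - 1) := by
          conv_lhs => rw [← hk', pow_succ, mul_comm]
      _ ≤ (1 + δ) * ((rball R a (k - 1)).ncard : ℝ) :=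
          mul_le_mul_of_nonneg_left h1 (le_of_lt hpos)
      _ ≤ ((rball R a ((k - 1) + 1)).ncard : ℝ) := h2
      _ ≤ (n : ℝ) := h3

end Balls



/-- In a bipartite `δ`-expander on `2n` vertices (`n ≥ 2`) with a perfect matching `M`,
every edge lies on an `M`-alternating cycle of length at most `2 + 4·ln n / ln(1+δ)`.
The alternating cycle of length `2m` is encoded by an injective `us : ZMod m → U`:
its matching edges are `(us i, M (us i))` and its non-matching edges are
`(us (i+1), M (us i))`; the given edge `(u,v)` must be one of these edges. -/
theorem edge_mem_short_alternating_cycle {U V : Type*} [Fintype U] [Fintype V]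
    (n : ℕ) (hn : 2 ≤ n) (hU : Fintype.card U = n) (hV : Fintype.card V = n)
    (E : U → V → Prop) (δ : ℝ) (hδ : 0 < δ)
    (hexp : IsBipartiteExpander E δ)
    (M : U ≃ V) (hM : ∀ u : U, E u (M u))
    (u : U) (v : V) (huv : E u v) :
    ∃ m : ℕ, 1 ≤ m ∧
      (2 * m : ℝ) ≤ 2 + 4 * Real.log n / Real.log (1 + δ) ∧
      ∃ us : ZMod m → U, Function.Injective us ∧
        (∀ i : ZMod m, E (us (i + 1)) (M (us i))) ∧
        (∃ i : ZMod m, (u = us i ∧ v = M (us i)) ∨ (u = us (i + 1) ∧ v = M (us i))) := by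
  classical
  have hlogn : 0 ≤ Real.log n := Real.log_nonneg (by exact_mod_cast (by omega : 1 ≤ n))
  have hlogδ : 0 < Real.log (1 + δ) := Real.log_pos (by linarith)
  by_cases hcase : v = M u
  · refine ⟨1, le_rfl, ?_, fun _ => u, fun a b _ => Subsingleton.elim a b, fun i => hM u,
      ⟨0, Or.inl ⟨rfl, hcase⟩⟩⟩
    have h4 : 0 ≤ 4 * Real.log n / Real.log (1 + δ) :=
      div_nonneg (by linarith) hlogδ.le
    push_cast
    linarith
  -- main case
  set w := M.symm v with hwdef
  have hw : M w = v := M.apply_symm_apply v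
  have huw : u ≠ w := by
    intro h
    exact hcase (by rw [h, hw])
  set Rf : U → U → Prop := fun a b => E b (M a) with hRf
  have hrefl : ∀ a, Rf a a := fun a => hM a
  have hreflb : ∀ a, (flip Rf) a a := fun a => hM a
  have Hf : ∀ S : Set U, (S.ncard : ℝ) ≤ (Fintype.card U : ℝ) / 2 →
      (1 + δ) * (S.ncard : ℝ) ≤ ({b | ∃ a ∈ S, Rf a b}.ncard : ℝ) := by
    intro S hS
    have himg : (M '' S).ncard = S.ncard := Set.ncard_image_of_injective S M.injective
    have hS' : ((M '' S).ncard : ℝ) ≤ (Fintype.card V : ℝ) / 2 := by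
      rw [himg, hV, ← hU]; exact hS
    have hh := hexp.2 (M '' S) hS'
    have hset : {u' : U | ∃ v' ∈ M '' S, E u' v'} = {b : U | ∃ a ∈ S, Rf a b} := by
      ext b
      constructor
      · rintro ⟨v', ⟨a, ha, rfl⟩, hE⟩
        exact ⟨a, ha, hE⟩
      · rintro ⟨a, ha, hE⟩
        exact ⟨M a, ⟨a, ha, rfl⟩, hE⟩
    rw [himg, hset] at hh
    exact hh
  have Hb : ∀ S : Set U, (S.ncard : ℝ) ≤ (Fintype.card U : ℝ) / 2 →
      (1 + δ) * (S.ncard : ℝ) ≤ ({b | ∃ a ∈ S, (flip Rf) a b}.ncard : ℝ) := by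
    intro S hS
    have hh := hexp.1 S hS
    have hset : {b : U | ∃ a ∈ S, (flip Rf) a b} =
        M ⁻¹' {v' : V | ∃ u' ∈ S, E u' v'} := rfl
    have hpre : (M ⁻¹' {v' : V | ∃ u' ∈ S, E u' v'}).ncard
        = {v' : V | ∃ u' ∈ S, E u' v'}.ncard := by
      rw [show (M ⁻¹' {v' : V | ∃ u' ∈ S, E u' v'}) =
          M.symm '' {v' : V | ∃ u' ∈ S, E u' v'} from by
        rw [Equiv.image_eq_preimage_symm, Equiv.symm_symm]]
      exact Set.ncard_image_of_injective _ M.symm.injective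
    rw [hset, hpre]
    exact hh
  obtain ⟨k1, hk1n, hk1big⟩ := exists_big_rball hrefl hδ Hf u (by rw [hU]; omega)
  obtain ⟨k2, hk2n, hk2big⟩ := exists_big_rball hreflb hδ Hb w (by rw [hU]; omega)
  -- the two balls intersect
  have hun : (rball Rf u k1 ∪ rball (flip Rf) w k2).ncard ≤ Fintype.card U := by
    simpa [Set.ncard_univ] using
      Set.ncard_le_ncard (Set.subset_univ (rball Rf u k1 ∪ rball (flip Rf) w k2))
        (Set.toFinite _)
  have hsum := Set.ncard_union_add_ncard_inter (rball Rf u k1) (rball (flip Rf) w k2)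
    (Set.toFinite _) (Set.toFinite _)
  have hcards : Fintype.card U < (rball Rf u k1).ncard + (rball (flip Rf) w k2).ncard := by
    have : (Fintype.card U : ℝ) < ((rball Rf u k1).ncard : ℝ) +
        ((rball (flip Rf) w k2).ncard : ℝ) := by linarith
    exact_mod_cast this
  have hint : ((rball Rf u k1) ∩ (rball (flip Rf) w k2)).ncard ≠ 0 := by omega
  obtain ⟨x, hxA, hxB⟩ := Set.nonempty_of_ncard_ne_zero hint
  have hxw : RChain Rf k2 x w := rchain_reverse hxB
  have hchain : RChain Rf (k1 + k2) u w := rchain_trans hxA hxw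
  obtain ⟨ℓ, hℓle, f, hf0, hfl, hstep, hinj⟩ := exists_injective_chain hchain
  have hℓ1 : 1 ≤ ℓ := by
    rcases Nat.eq_zero_or_pos ℓ with h0 | h
    · exfalso; subst h0; exact huw (hf0.symm.trans hfl)
    · exact h
  set m := ℓ + 1 with hm
  haveI : NeZero m := ⟨by omega⟩
  haveI : Fact (1 < m) := ⟨by omega⟩
  -- length bound
  have hkb : ∀ k : ℕ, ((1 + δ : ℝ)) ^ k ≤ (Fintype.card U : ℝ) →
      (k : ℝ) ≤ Real.log n / Real.log (1 + δ) := by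
    intro k hk
    rw [hU] at hk
    have hlogle : Real.log ((1 + δ) ^ k) ≤ Real.log n :=
      Real.log_le_log (by positivity) hk
    rw [Real.log_pow] at hlogle
    rw [le_div_iff₀ hlogδ]
    exact_mod_cast hlogle
  have hb1 := hkb k1 hk1n
  have hb2 := hkb k2 hk2n
  have hmle : (m : ℝ) ≤ (k1 : ℝ) + (k2 : ℝ) + 1 := by
    have : m ≤ k1 + k2 + 1 := by omega
    exact_mod_cast this
  have hbound : (2 * m : ℝ) ≤ 2 + 4 * Real.log n / Real.log (1 + δ) := by
    have h4 : 4 * Real.log n / Real.log (1 + δ) = 4 * (Real.log n / Real.log (1 + δ)) := by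
      ring
    rw [h4]
    linarith
  refine ⟨m, by omega, hbound, fun i : ZMod m => f (ZMod.val i),
    ?_, ?_, ?_⟩
  · intro i j hij
    have h := hinj i.val (by have := ZMod.val_lt i; omega) j.val
      (by have := ZMod.val_lt j; omega) hij
    exact ZMod.val_injective m h
  · intro i
    have hival : i.val < m := ZMod.val_lt i
    have haddval : (i + 1).val = (i.val + 1) % m := by
      rw [ZMod.val_add, ZMod.val_one]
    by_cases hlt : i.val < ℓ
    · have hv1 : (i + 1).val = i.val + 1 := by
        rw [haddval, Nat.mod_eq_of_lt (by omega)]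
      show E (f (i + 1).val) (M (f i.val))
      rw [hv1]
      exact hstep i.val hlt
    · have hival' : i.val = ℓ := by omega
      have hv1 : (i + 1).val = 0 := by
        rw [haddval, hival']
        exact Nat.mod_self _
      show E (f (i + 1).val) (M (f i.val))
      rw [hv1, hival', hf0, hfl, hw]
      exact huv
  · refine ⟨(ℓ : ZMod m), Or.inr ⟨?_, ?_⟩⟩
    · have hval : ((ℓ : ZMod m)).val = ℓ := by
        rw [ZMod.val_natCast, Nat.mod_eq_of_lt (by omega)]
      show u = f (((ℓ : ZMod m) + 1).val)
      have hv1 : (((ℓ : ZMod m)) + 1).val = 0 := by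
        rw [ZMod.val_add, ZMod.val_one, hval]
        exact Nat.mod_self _
      rw [hv1, hf0]
    · have hval : ((ℓ : ZMod m)).val = ℓ := by
        rw [ZMod.val_natCast, Nat.mod_eq_of_lt (by omega)]
      show v = M (f ((ℓ : ZMod m)).val)
      rw [hval, hfl, hw]
end

section
/- Let G be a d-regular bipartite graph with an edge e = {x,y}, and let G' be the n-fold cyclic cover of G along e: take n disjoint copies of G, delete all copies of e, and connect each copy of x to the copy of y in the cyclically next copy of G. If p(e) = 1/(x₀+1) is the probability that a uniform random perfect matching of G contains e, then for each new edge e' of G', p(e') = p(e)^n / (p(e)^n + (1-p(e))^n) = 1/(x₀^n + 1). -/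
/-- `p(e)` for the edge `e = (u,v)`: the fraction of perfect matchings of the bipartite
graph `E` (viewed as bijections `U ≃ V` using only edges of `E`) containing `e`. -/
noncomputable def pmProb {U V : Type*} (E : U → V → Prop) (u : U) (v : V) : ℝ :=
  ({σ : U ≃ V | (∀ x : U, E x (σ x)) ∧ σ u = v}.ncard : ℝ) /
    ({σ : U ≃ V | ∀ x : U, E x (σ x)}.ncard : ℝ)

/-- The `n`-fold cyclic cover of the bipartite graph `E` along the edge `(x,y)`:
take `n` disjoint copies of the graph (indexed by `ZMod n`), delete all copies of the
edge `(x,y)`, and join the copy of `x` in layer `i` to the copy of `y` in layer `i+1`. -/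
def coverRel {U V : Type*} (E : U → V → Prop) (x : U) (y : V) (n : ℕ) :
    U × ZMod n → V × ZMod n → Prop :=
  fun p q =>
    (E p.1 q.1 ∧ ¬(p.1 = x ∧ q.1 = y) ∧ q.2 = p.2) ∨
    (p.1 = x ∧ q.1 = y ∧ q.2 = p.2 + 1)

/-!
A perfect matching of the cover uses either every new edge or none. If it uses the new edge out of
layer `j`, the copy of `y` in layer `j + 1` is taken, so the `|U|` copies of `U` in layer `j + 1`
cannot all be matched inside their layer to the remaining `|V| - 1 = |U| - 1` vertices, and the new
edge out of layer `j + 1` is used as well. Matchings of the first kind are, up to shifting the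
copies of `y`, `n`-tuples of perfect matchings of `G` through `e`; those of the second kind are
`n`-tuples of perfect matchings avoiding `e`. With `a` and `b` the numbers of these,
`p(e) = a / (a + b)` and `p(e') = aⁿ / (aⁿ + bⁿ)`. Regularity makes `a` positive: Hall's condition
for `G - x - y` follows by double counting edges.
-/

open Finset

section RegularBipartite

variable {U V : Type*} [Fintype U] [Fintype V] {E : U → V → Prop} {d : ℕ}

lemma card_filter_univ_eq_ncard {α : Type*} [Fintype α] (p : α → Prop) [DecidablePred p] :
    #{a | p a} = {a | p a}.ncard := by
  rw [Set.ncard_eq_toFinset_card', Set.toFinset_ofPred]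

lemma card_eq_card_of_regular [DecidableRel E] (hU : ∀ u, #{v | E u v} = d)
    (hV : ∀ v, #{u | E u v} = d) (hd : d ≠ 0) : Fintype.card U = Fintype.card V :=
  Nat.eq_of_mul_eq_mul_right (Nat.pos_of_ne_zero hd) <|
    card_mul_eq_card_mul E (s := univ) (t := univ) (fun u _ => hU u) (fun v _ => hV v)

lemma card_le_card_biUnion_erase [DecidableEq V] [DecidableRel E] (hU : ∀ u, #{v | E u v} = d)
    (hV : ∀ v, #{u | E u v} = d) {x : U} {y : V} (hxy : E x y) {s : Finset U} (hx : x ∉ s) :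
    #s ≤ #(s.biUnion fun u => ({v | E u v} : Finset V).erase y) := by
  set T := s.biUnion fun u => ({v | E u v} : Finset V).erase y
  have hyT : y ∉ T := by simp [T]
  have hd : 0 < d := hU x ▸ card_pos.2 ⟨y, by simpa using hxy⟩
  -- count the edges leaving `s`: all of them end in `T ∪ {y}`, and fewer than `d` end in `y`
  have key : d * #s ≤ (d - 1) + d * #T := calc
    d * #s = ∑ u ∈ s, #((insert y T).bipartiteAbove E u) := by
      rw [sum_const_nat fun u hu => ?_, mul_comm]
      rw [← hU u]
      congr 1
      ext v
      by_cases hv : v = y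
      · simp [hv, bipartiteAbove]
      · simpa [T, hv, bipartiteAbove] using fun h => ⟨u, hu, h⟩
    _ = ∑ v ∈ insert y T, #(s.bipartiteBelow E v) :=
      sum_card_bipartiteAbove_eq_sum_card_bipartiteBelow E
    _ = #(s.bipartiteBelow E y) + ∑ v ∈ T, #(s.bipartiteBelow E v) := sum_insert hyT
    _ ≤ (d - 1) + d * #T := by
      gcongr
      · have hsub : s.bipartiteBelow E y ⊂ ({u | E u y} : Finset U) :=
          (ssubset_iff_of_subset fun u hu => by simpa using (mem_bipartiteBelow E).1 hu |>.2).2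
            ⟨x, by simpa using hxy, fun h => hx ((mem_bipartiteBelow E).1 h).1⟩
        have := hV y ▸ card_lt_card hsub
        omega
      · rw [mul_comm, ← smul_eq_mul]
        refine sum_le_card_nsmul _ _ _ fun v _ => hV v ▸ card_le_card fun u hu => ?_
        simpa using ((mem_bipartiteBelow E).1 hu).2
  by_contra! h
  have := Nat.mul_le_mul_left d (Nat.succ_le_of_lt h)
  rw [Nat.mul_succ] at this
  omega

theorem exists_perfect_matching_through_edge (hU : ∀ u, {v | E u v}.ncard = d)
    (hV : ∀ v, {u | E u v}.ncard = d) {x : U} {y : V} (hxy : E x y) :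
    ∃ σ : U ≃ V, (∀ u, E u (σ u)) ∧ σ x = y := by
  classical
  have hU' u : #{v | E u v} = d := (card_filter_univ_eq_ncard _).trans (hU u)
  have hV' v : #{u | E u v} = d := (card_filter_univ_eq_ncard _).trans (hV v)
  have hd : d ≠ 0 := hU' x ▸ card_ne_zero_of_mem (by simpa using hxy)
  set F : U → Finset V := fun u => ({v | E u v} : Finset V).erase y
  set t : U → Finset V := fun u => if u = x then {y} else F u
  have hall (s : Finset U) : #s ≤ #(s.biUnion t) := by
    by_cases hxs : x ∈ s
    · have hy : y ∉ (s.erase x).biUnion F := by simp [F]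
      calc #s = #(s.erase x) + 1 := (card_erase_add_one hxs).symm
        _ ≤ #((s.erase x).biUnion F) + 1 :=
          Nat.succ_le_succ (card_le_card_biUnion_erase hU' hV' hxy (notMem_erase x s))
        _ = #(insert y ((s.erase x).biUnion F)) := (card_insert_of_notMem hy).symm
        _ ≤ #(s.biUnion t) := card_le_card fun v hv => by
          simp only [mem_insert, mem_biUnion, mem_erase, t] at hv ⊢
          rcases hv with rfl | ⟨u, ⟨hux, hu⟩, hv⟩
          · exact ⟨x, hxs, by simp⟩
          · exact ⟨u, hu, by simpa [hux] using hv⟩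
    · rw [biUnion_congr rfl fun u hu => if_neg (ne_of_mem_of_not_mem hu hxs)]
      exact card_le_card_biUnion_erase hU' hV' hxy hxs
  obtain ⟨f, hf, hft⟩ := (all_card_le_biUnion_card_iff_exists_injective t).1 hall
  have hfx : f x = y := by simpa [t] using hft x
  have hfE u : E u (f u) := by
    by_cases hu : u = x
    · exact hu ▸ hfx ▸ hxy
    · exact (by simpa [t, F, hu] using hft u : f u ≠ y ∧ E u (f u)).2
  exact ⟨Equiv.ofBijective f ((Fintype.bijective_iff_injective_and_card f).2
    ⟨hf, card_eq_card_of_regular hU' hV' hd⟩), hfE, hfx⟩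

end RegularBipartite

lemma Equiv.prodCongrLeft_injective {ι U V : Type*} :
    Function.Injective (Equiv.prodCongrLeft : (ι → U ≃ V) → U × ι ≃ V × ι) :=
  fun _ _ h => funext fun i => Equiv.ext fun u => congrArg Prod.fst (Equiv.congr_fun h (u, i))

lemma Equiv.exists_prodCongrLeft_eq {ι U V : Type*} (τ : U × ι ≃ V × ι)
    (h : ∀ p, (τ p).2 = p.2) : ∃ f : ι → U ≃ V, Equiv.prodCongrLeft f = τ := by
  have h' q : (τ.symm q).2 = q.2 := by simpa using (h (τ.symm q)).symm
  refine ⟨fun i => ⟨fun u => (τ (u, i)).1, fun v => (τ.symm (v, i)).1, fun u => ?_, fun v => ?_⟩,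
    Equiv.ext fun p => Prod.ext rfl (h p).symm⟩
  · simp [show ((τ (u, i)).1, i) = τ (u, i) from Prod.ext rfl (h (u, i)).symm]
  · simp [show ((τ.symm (v, i)).1, i) = τ.symm (v, i) from Prod.ext rfl (h' (v, i)).symm]

lemma Set.ncard_image_univ_pi_const {ι α β : Type*} [Fintype ι] {F : (ι → α) → β}
    (hF : Function.Injective F) (S : Set α) :
    (F '' Set.univ.pi fun _ => S).ncard = S.ncard ^ Fintype.card ι := by
  rw [Set.ncard_image_of_injective _ hF, ← Nat.card_coe_set_eq,
    Nat.card_congr (Equiv.Set.univPi _), Nat.card_fun, Nat.card_coe_set_eq,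
    Nat.card_eq_fintype_card]

lemma pmProb_eq_div {U V : Type*} [Finite U] [Finite V] (E : U → V → Prop) (u : U) (v : V) :
    pmProb E u v = ({σ : U ≃ V | (∀ x, E x (σ x)) ∧ σ u = v}.ncard : ℝ) /
      ({σ : U ≃ V | (∀ x, E x (σ x)) ∧ σ u = v}.ncard +
        {σ : U ≃ V | (∀ x, E x (σ x)) ∧ σ u ≠ v}.ncard) := by
  rw [pmProb, ← Nat.cast_add,
    ← Set.ncard_inter_add_ncard_sdiff_eq_ncard {σ : U ≃ V | ∀ x, E x (σ x)} {σ | σ u = v}]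
  rfl

section Cover

variable {U V : Type*} {E : U → V → Prop} {x : U} {y : V} {n : ℕ}

/-- Composing a layerwise matching with this shift moves each edge `(x, j) ↦ (y, j)` onto the
new edge `(x, j) ↦ (y, j + 1)`. -/
def coverShift [DecidableEq V] (y : V) (n : ℕ) : V × ZMod n ≃ V × ZMod n :=
  Equiv.prodCongrRight fun v => Equiv.addRight (if v = y then 1 else 0)

@[simp] lemma coverShift_apply [DecidableEq V] (q : V × ZMod n) :
    coverShift y n q = (q.1, q.2 + if q.1 = y then 1 else 0) := rfl

@[simp] lemma coverShift_symm_apply [DecidableEq V] (q : V × ZMod n) :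
    (coverShift y n).symm q = (q.1, q.2 - if q.1 = y then 1 else 0) := by
  simp only [coverShift, Equiv.prodCongrRight_symm, sub_eq_add_neg]
  rfl

variable [Fintype U] [Fintype V] {τ : U × ZMod n ≃ V × ZMod n}

lemma cover_apply_succ (hcard : Fintype.card U = Fintype.card V)
    (hτ : ∀ p, coverRel E x y n p (τ p)) {j : ZMod n} (h : τ (x, j) = (y, j + 1)) :
    τ (x, j + 1) = (y, j + 1 + 1) := by
  by_contra hne
  have hlayer u : (τ (u, j + 1)).2 = j + 1 := (hτ (u, j + 1)).elim (·.2.2) fun ⟨hu, hv, hj⟩ =>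
    (hne (by rw [← show u = x from hu]; exact Prod.ext hv hj)).elim
  have hinj : Function.Injective fun u => (τ (u, j + 1)).1 := fun u u' huu' =>
    congrArg Prod.fst (τ.injective (Prod.ext huu' (by rw [hlayer, hlayer])))
  have hy : y ∉ Set.range fun u => (τ (u, j + 1)).1 := by
    rintro ⟨u, hu⟩
    obtain ⟨rfl, hj⟩ := Prod.mk_inj.1 (τ.injective ((Prod.ext hu (hlayer u)).trans h.symm))
    exact hne (by rw [hj]; exact h)
  exact (Fintype.card_lt_of_injective_of_notMem _ hinj hy).ne hcard

variable [NeZero n]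

lemma cover_apply_eq_iff (hcard : Fintype.card U = Fintype.card V)
    (hτ : ∀ p, coverRel E x y n p (τ p)) (i j : ZMod n) :
    τ (x, i) = (y, i + 1) ↔ τ (x, j) = (y, j + 1) := by
  suffices ∀ i j : ZMod n, τ (x, i) = (y, i + 1) → τ (x, j) = (y, j + 1) from
    ⟨this i j, this j i⟩
  intro i j h
  have hk (k : ℕ) : τ (x, i + k) = (y, i + k + 1) := by
    induction k with
    | zero => simpa using h
    | succ k ih => simpa [add_assoc] using cover_apply_succ hcard hτ ih
  simpa using hk (j - i).val


lemma cover_newEdge_eq_image [DecidableEq V] (hcard : Fintype.card U = Fintype.card V)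
    (hxy : E x y) (i : ZMod n) :
    {τ : U × ZMod n ≃ V × ZMod n | (∀ p, coverRel E x y n p (τ p)) ∧ τ (x, i) = (y, i + 1)} =
      (fun f => (Equiv.prodCongrLeft f).trans (coverShift y n)) ''
        Set.univ.pi fun _ => {σ | (∀ u, E u (σ u)) ∧ σ x = y} := by
  ext τ
  constructor
  · rintro ⟨hτ, hi⟩
    have hnew j := (cover_apply_eq_iff hcard hτ i j).1 hi
    have hlayer p : ((coverShift y n).symm (τ p)).2 = p.2 := by
      obtain ⟨u, j⟩ := p
      by_cases hu : u = x
      · simp [hu, hnew j]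
      rcases hτ (u, j) with ⟨-, -, hj⟩ | ⟨hux, -⟩
      · have hy : (τ (u, j)).1 ≠ y := fun hy => by
          have : τ (u, j) = τ (x, j - 1) := by rw [hnew, sub_add_cancel]; exact Prod.ext hy hj
          exact hu (congrArg Prod.fst (τ.injective this))
        simpa [hy] using hj
      · exact (hu hux).elim
    obtain ⟨f, hf⟩ := Equiv.exists_prodCongrLeft_eq (τ.trans (coverShift y n).symm) hlayer
    have hfτ j u : f j u = (τ (u, j)).1 := by
      simpa using congrArg Prod.fst (Equiv.congr_fun hf (u, j))
    refine ⟨f, fun j _ => ⟨fun u => ?_, by simp [hfτ, hnew j]⟩, by simp [hf, Equiv.trans_assoc]⟩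
    rcases hτ (u, j) with ⟨hE, -⟩ | ⟨rfl, hy, -⟩
    · simpa [hfτ] using hE
    · simpa [hfτ, hy] using hxy
  · rintro ⟨f, hf, rfl⟩
    simp only [Set.mem_pi, Set.mem_univ, Set.mem_ofPred_eq, forall_const] at hf
    refine ⟨fun ⟨u, j⟩ => ?_, by simp [(hf i).2]⟩
    by_cases hu : u = x
    · subst hu
      exact Or.inr ⟨rfl, by simp [(hf j).2]⟩
    · have hy : f j u ≠ y := fun hy => hu ((f j).injective (hy.trans (hf j).2.symm))
      exact Or.inl ⟨by simpa [hy] using (hf j).1 u, by simp [hu], by simp [hy]⟩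

lemma cover_oldEdge_eq_image (hcard : Fintype.card U = Fintype.card V) (i : ZMod n) :
    {τ : U × ZMod n ≃ V × ZMod n | (∀ p, coverRel E x y n p (τ p)) ∧ τ (x, i) ≠ (y, i + 1)} =
      Equiv.prodCongrLeft '' Set.univ.pi fun _ => {σ | (∀ u, E u (σ u)) ∧ σ x ≠ y} := by
  ext τ
  constructor
  · rintro ⟨hτ, hi⟩
    have hold p : E p.1 (τ p).1 ∧ ¬(p.1 = x ∧ (τ p).1 = y) ∧ (τ p).2 = p.2 :=
      (hτ p).resolve_right fun ⟨hu, hv, hj⟩ =>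
        hi ((cover_apply_eq_iff hcard hτ p.2 i).1 (hu ▸ Prod.ext hv hj))
    obtain ⟨f, hf⟩ := Equiv.exists_prodCongrLeft_eq τ fun p => (hold p).2.2
    have hfτ j u : f j u = (τ (u, j)).1 := by
      simpa using congrArg Prod.fst (Equiv.congr_fun hf (u, j))
    exact ⟨f, fun j _ => ⟨fun u => hfτ j u ▸ (hold (u, j)).1,
      fun hy => (hold (x, j)).2.1 ⟨rfl, hfτ j x ▸ hy⟩⟩, hf⟩
  · rintro ⟨f, hf, rfl⟩
    simp only [Set.mem_pi, Set.mem_univ, Set.mem_ofPred_eq, forall_const] at hf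
    refine ⟨fun ⟨u, j⟩ => Or.inl ⟨by simpa using (hf j).1 u, ?_, by simp⟩, by simp [(hf i).2]⟩
    rintro ⟨rfl, hy⟩
    exact (hf j).2 (by simpa using hy)

end Cover

lemma pow_div_pow_add_pow_eq {a b : ℝ} (ha : 0 < a) (hb : 0 ≤ b) (n : ℕ) :
    a ^ n / (a ^ n + b ^ n) =
      (a / (a + b)) ^ n / ((a / (a + b)) ^ n + (1 - a / (a + b)) ^ n) := by
  have hab : a + b ≠ 0 := by positivity
  rw [show 1 - a / (a + b) = b / (a + b) by field_simp; ring, div_pow, div_pow, ← add_div,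
    div_div_div_cancel_right₀ (by positivity)]

lemma pow_div_pow_add_pow_eq_one_div {a b x₀ : ℝ} (ha : 0 < a) (hb : 0 ≤ b)
    (h : a / (a + b) = 1 / (x₀ + 1)) (n : ℕ) : a ^ n / (a ^ n + b ^ n) = 1 / (x₀ ^ n + 1) := by
  have hx₀1 : x₀ + 1 ≠ 0 := fun h0 => by
    rw [h0, div_zero, div_eq_zero_iff] at h
    rcases h with h | h <;> linarith
  have hx₀ : x₀ = b / a := by
    field_simp at h ⊢
    linarith
  rw [hx₀, div_pow]
  field_simp
  ring

theorem pmProb_cyclic_cover_general {U V : Type*} [Fintype U] [Fintype V]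
    (d n : ℕ) (hn : 1 ≤ n) (E : U → V → Prop)
    (hregU : ∀ u : U, ({v : V | E u v}.ncard) = d)
    (hregV : ∀ v : V, ({u : U | E u v}.ncard) = d)
    (x : U) (y : V) (hxy : E x y)
    (x₀ : ℝ) (hp : pmProb E x y = 1 / (x₀ + 1)) :
    ∀ i : ZMod n,
      pmProb (coverRel E x y n) (x, i) (y, i + 1) =
          pmProb E x y ^ n / (pmProb E x y ^ n + (1 - pmProb E x y) ^ n) ∧
      pmProb (coverRel E x y n) (x, i) (y, i + 1) = 1 / (x₀ ^ n + 1) := by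
  classical
  intro i
  have : NeZero n := ⟨by omega⟩
  obtain ⟨σ, hσ, hσx⟩ := exists_perfect_matching_through_edge hregU hregV hxy
  have hcard : Fintype.card U = Fintype.card V := Fintype.card_congr σ
  set a := {σ : U ≃ V | (∀ u, E u (σ u)) ∧ σ x = y}.ncard
  set b := {σ : U ≃ V | (∀ u, E u (σ u)) ∧ σ x ≠ y}.ncard
  have ha : (0 : ℝ) < a := Nat.cast_pos.2 <| (Set.ncard_pos (Set.toFinite _)).2 ⟨σ, hσ, hσx⟩
  have hE : pmProb E x y = a / (a + b) := pmProb_eq_div E x y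
  have hcover : pmProb (coverRel E x y n) (x, i) (y, i + 1) = (a : ℝ) ^ n / (a ^ n + b ^ n) := by
    rw [pmProb_eq_div, cover_newEdge_eq_image hcard hxy, cover_oldEdge_eq_image hcard,
      Set.ncard_image_univ_pi_const fun f g h => Equiv.prodCongrLeft_injective <|
        Equiv.ext fun p => (coverShift y n).injective (Equiv.congr_fun h p),
      Set.ncard_image_univ_pi_const Equiv.prodCongrLeft_injective, ZMod.card]
    push_cast
    rfl
  rw [hE] at hp
  rw [hcover, hE]
  exact ⟨pow_div_pow_add_pow_eq ha b.cast_nonneg n,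
    pow_div_pow_add_pow_eq_one_div ha b.cast_nonneg hp n⟩

/-- If `G` is a `d`-regular bipartite graph with an edge `e = (x,y)` with
`p(e) = 1/(x₀+1)`, then in the `n`-fold cyclic cover each new edge `e'` satisfies
`p(e') = p(e)ⁿ/(p(e)ⁿ + (1-p(e))ⁿ) = 1/(x₀ⁿ + 1)`. -/
theorem pmProb_cyclic_cover {U V : Type*} [Fintype U] [Fintype V]
    (d n : ℕ) (hn : 1 ≤ n) (E : U → V → Prop)
    (hregU : ∀ u : U, ({v : V | E u v}.ncard) = d)
    (hregV : ∀ v : V, ({u : U | E u v}.ncard) = d)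
    (hpm : ∃ σ : U ≃ V, ∀ u : U, E u (σ u))
    (x : U) (y : V) (hxy : E x y)
    (x₀ : ℝ) (hp : pmProb E x y = 1 / (x₀ + 1)) :
    ∀ i : ZMod n,
      pmProb (coverRel E x y n) (x, i) (y, i + 1) =
          pmProb E x y ^ n / (pmProb E x y ^ n + (1 - pmProb E x y) ^ n) ∧
      pmProb (coverRel E x y n) (x, i) (y, i + 1) = 1 / (x₀ ^ n + 1) :=
  pmProb_cyclic_cover_general d n hn E hregU hregV x y hxy x₀ hp
end

section
/- For a graph G with maximum degree d, every root λ of the independence polynomial I(G,x) satisfies |λ| > e^{-1}/(d+1). -/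
open Classical

/-- `S` is an independent set of vertices of `G`. -/
def IsIndep {V : Type*} (G : SimpleGraph V) (S : Finset V) : Prop :=
  ∀ a ∈ S, ∀ b ∈ S, ¬ G.Adj a b

/-- `i_k(G)`: the number of independent vertex sets of size `k`. -/
noncomputable def numIndep {V : Type*} (G : SimpleGraph V) (k : ℕ) : ℕ :=
  {S : Finset V | IsIndep G S ∧ S.card = k}.ncard

/-- The independence polynomial `I(G,x) = Σ_k i_k(G) x^k`. -/
noncomputable def indepPoly {V : Type*} [Fintype V] (G : SimpleGraph V) (x : ℂ) : ℂ :=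
  ∑ k ∈ Finset.range (Fintype.card V + 1), (numIndep G k : ℂ) * x ^ k

/-!
Write `Z_A` for the independence polynomial of the subgraph induced on a finite vertex set `A`,
so that `Z_{A ∪ {v}} = Z_A + x Z_{A \ N(v)}` for `v ∉ A`. Suppose `‖x‖ ≤ c (1 - c)^d` with
`0 ≤ c < 1`. By strong induction on `B`, `‖x Z_{B \ N(v)}‖ ≤ c ‖Z_B‖` for all `B` and `v`:
re-inserting the at most `d` neighbours of `v` into `B \ N(v)` one at a time, the recurrence
and the induction hypothesis show that each insertion multiplies `‖Z‖` by at least `1 - c`, so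
`‖x Z_{B \ N(v)}‖ ≤ c (1 - c)^d ‖Z_{B \ N(v)}‖ ≤ c ‖Z_B‖`. The same telescoping from `∅` gives
`‖Z_A‖ ≥ (1 - c)^{|A|} > 0`. Finally `c = 1/(d+1)` and `(1 + 1/d)^d ≤ e` give
`c (1 - c)^d ≥ e⁻¹/(d+1)`.
-/

open Finset

section IndepPolyOn

variable {V : Type*} (G : SimpleGraph V)

theorem isIndep_insert {S : Finset V} {v : V} :
    IsIndep G (insert v S) ↔ IsIndep G S ∧ ∀ u ∈ S, ¬ G.Adj v u := by
  simp only [IsIndep, mem_insert, forall_eq_or_imp, G.irrefl, not_false_eq_true, true_and]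
  grind [G.adj_symm]

noncomputable def indepPolyOn (A : Finset V) (x : ℂ) : ℂ :=
  ∑ S ∈ A.powerset with IsIndep G S, x ^ S.card

@[simp]
theorem indepPolyOn_empty (x : ℂ) : indepPolyOn G ∅ x = 1 := by
  rw [indepPolyOn, powerset_empty, filter_singleton]
  simp [IsIndep]

theorem indepPolyOn_insert {A : Finset V} {v : V} (hv : v ∉ A) (x : ℂ) :
    indepPolyOn G (insert v A) x
      = indepPolyOn G A x + x * indepPolyOn G (A.filter (¬ G.Adj v ·)) x := by
  have hfilter : {S ∈ (A.filter (¬ G.Adj v ·)).powerset | IsIndep G S}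
      = {S ∈ A.powerset | IsIndep G (insert v S)} := by
    ext S
    simp only [mem_filter, mem_powerset, isIndep_insert, subset_iff]
    grind
  rw [indepPolyOn, sum_filter, sum_powerset_insert hv, ← sum_filter, ← sum_filter, indepPolyOn,
    indepPolyOn, hfilter, mul_sum]
  refine congrArg _ (sum_congr rfl fun S hS => ?_)
  have hvS : v ∉ S := fun h => hv (mem_powerset.mp (mem_filter.mp hS).1 h)
  rw [card_insert_of_notMem hvS, pow_succ']

end IndepPolyOn

section ZeroFree

variable {V : Type*} {G : SimpleGraph V} {x : ℂ} {c : ℝ}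

theorem one_sub_mul_norm_le_norm_indepPolyOn_insert {B : Finset V} {v : V} (hv : v ∉ B)
    (h : ‖x * indepPolyOn G (B.filter (¬ G.Adj v ·)) x‖ ≤ c * ‖indepPolyOn G B x‖) :
    (1 - c) * ‖indepPolyOn G B x‖ ≤ ‖indepPolyOn G (insert v B) x‖ := by
  rw [indepPolyOn_insert G hv]
  linarith [norm_sub_le_norm_add (indepPolyOn G B x)
    (x * indepPolyOn G (B.filter (¬ G.Adj v ·)) x)]

theorem pow_mul_norm_indepPolyOn_sdiff_le (hc : c ≤ 1) {B F : Finset V} (hFB : F ⊆ B)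
    (h : ∀ C ⊂ B, ∀ u,
      ‖x * indepPolyOn G (C.filter (¬ G.Adj u ·)) x‖ ≤ c * ‖indepPolyOn G C x‖) :
    (1 - c) ^ F.card * ‖indepPolyOn G (B \ F) x‖ ≤ ‖indepPolyOn G B x‖ := by
  induction F using Finset.induction_on with
  | empty => simp
  | insert u F huF ih =>
    obtain ⟨huB, hFB⟩ := insert_subset_iff.mp hFB
    have hu : u ∉ B \ insert u F := by simp
    have hstep := one_sub_mul_norm_le_norm_indepPolyOn_insert hu
      (h _ ((ssubset_iff_of_subset sdiff_subset).mpr ⟨u, huB, hu⟩) u)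
    rw [sdiff_insert, insert_erase (mem_sdiff.mpr ⟨huB, huF⟩)] at hstep
    have hc' : 0 ≤ 1 - c := sub_nonneg.mpr hc
    calc (1 - c) ^ (insert u F).card * ‖indepPolyOn G (B \ insert u F) x‖
        = (1 - c) ^ F.card * ((1 - c) * ‖indepPolyOn G ((B \ F).erase u) x‖) := by
          rw [card_insert_of_notMem huF, sdiff_insert]; ring
      _ ≤ (1 - c) ^ F.card * ‖indepPolyOn G (B \ F) x‖ := by gcongr
      _ ≤ ‖indepPolyOn G B x‖ := ih hFB

theorem norm_mul_indepPolyOn_filter_le [Finite V] {d : ℕ}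
    (hdeg : ∀ v, (G.neighborSet v).ncard ≤ d) (hc0 : 0 ≤ c) (hc1 : c ≤ 1)
    (hx : ‖x‖ ≤ c * (1 - c) ^ d) (B : Finset V) (v : V) :
    ‖x * indepPolyOn G (B.filter (¬ G.Adj v ·)) x‖ ≤ c * ‖indepPolyOn G B x‖ := by
  induction B using Finset.strongInduction generalizing v with
  | H B ih =>
  set F := B.filter (G.Adj v)
  have hF : F.card ≤ d :=
    calc F.card = (F : Set V).ncard := (Set.ncard_coe_finset F).symm
      _ ≤ (G.neighborSet v).ncard :=
        Set.ncard_le_ncard (fun u hu => (mem_filter.mp hu).2) (Set.toFinite _)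
      _ ≤ d := hdeg v
  have hshrink := pow_mul_norm_indepPolyOn_sdiff_le hc1 (filter_subset (G.Adj v) B) ih
  rw [← filter_not] at hshrink
  calc ‖x * indepPolyOn G (B.filter (¬ G.Adj v ·)) x‖
      = ‖x‖ * ‖indepPolyOn G (B.filter (¬ G.Adj v ·)) x‖ := norm_mul _ _
    _ ≤ c * (1 - c) ^ F.card * ‖indepPolyOn G (B.filter (¬ G.Adj v ·)) x‖ := by
      have hpow : (1 - c) ^ d ≤ (1 - c) ^ F.card :=
        pow_le_pow_of_le_one (by linarith) (by linarith) hF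
      gcongr
      exact hx.trans (mul_le_mul_of_nonneg_left hpow hc0)
    _ ≤ c * ‖indepPolyOn G B x‖ := by rw [mul_assoc]; gcongr

theorem indepPolyOn_ne_zero [Finite V] {d : ℕ} (hdeg : ∀ v, (G.neighborSet v).ncard ≤ d)
    (hc0 : 0 ≤ c) (hc1 : c < 1) (hx : ‖x‖ ≤ c * (1 - c) ^ d) (A : Finset V) :
    indepPolyOn G A x ≠ 0 := by
  have h := pow_mul_norm_indepPolyOn_sdiff_le hc1.le (subset_refl A)
    fun C _ u => norm_mul_indepPolyOn_filter_le hdeg hc0 hc1.le hx C u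
  rw [Finset.sdiff_self, indepPolyOn_empty, norm_one, mul_one] at h
  exact norm_pos_iff.mp ((pow_pos (sub_pos.mpr hc1) _).trans_le h)

end ZeroFree

theorem indepPoly_eq_indepPolyOn_univ {V : Type*} [Fintype V] (G : SimpleGraph V) (x : ℂ) :
    indepPoly G x = indepPolyOn G univ x := by
  rw [indepPoly, indepPolyOn, powerset_univ, ← sum_fiberwise_of_maps_to (g := card)
    fun S _ => mem_range.mpr (Nat.lt_succ_of_le (card_le_univ S))]
  refine sum_congr rfl fun k _ => ?_
  have hnum : numIndep G k = #{S : Finset V | IsIndep G S ∧ S.card = k} := by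
    rw [numIndep, ← Set.ncard_coe_finset]
    simp
  rw [hnum, filter_filter, ← nsmul_eq_mul, ← sum_const]
  exact sum_congr rfl fun S hS => by rw [(mem_filter.mp hS).2.2]

theorem exists_exp_neg_one_div_le_mul_one_sub_pow (d : ℕ) :
    ∃ c : ℝ, 0 ≤ c ∧ c < 1 ∧ Real.exp (-1) / (d + 1) ≤ c * (1 - c) ^ d := by
  rcases Nat.eq_zero_or_pos d with rfl | hd
  -- here `1 / (d + 1) = 1` is not admissible
  · exact ⟨Real.exp (-1), (Real.exp_pos _).le, Real.exp_lt_one_iff.mpr (by norm_num), by simp⟩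
  refine ⟨1 / (d + 1), by positivity, (div_lt_one (by positivity)).mpr (by simpa using hd), ?_⟩
  have hd' : (d : ℝ) ≠ 0 := by positivity
  have hinv : ((1 + (d : ℝ)⁻¹) ^ d)⁻¹ = (1 - 1 / (d + 1)) ^ d := by
    rw [← inv_pow]
    congr 1
    field_simp
    ring
  calc Real.exp (-1) / (d + 1) = 1 / (d + 1) * (Real.exp 1)⁻¹ := by rw [Real.exp_neg]; ring
    _ ≤ 1 / (d + 1) * ((1 + (d : ℝ)⁻¹) ^ d)⁻¹ := by
      gcongr
      exact Real.one_add_inv_pow_le_exp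
    _ = 1 / (d + 1) * (1 - 1 / (d + 1)) ^ d := by rw [hinv]

/-- Every root `λ` of the independence polynomial of a graph of maximum degree at
most `d` satisfies `|λ| > e⁻¹/(d+1)`. -/
theorem indepPoly_root_abs_gt {V : Type*} [Fintype V] (G : SimpleGraph V) (d : ℕ)
    (hdeg : ∀ v : V, (G.neighborSet v).ncard ≤ d)
    (lam : ℂ) (hroot : indepPoly G lam = 0) :
    Real.exp (-1) / ((d : ℝ) + 1) < ‖lam‖ := by
  obtain ⟨c, hc0, hc1, hc⟩ := exists_exp_neg_one_div_le_mul_one_sub_pow d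
  by_contra! hlam
  rw [indepPoly_eq_indepPolyOn_univ] at hroot
  exact indepPolyOn_ne_zero hdeg hc0 hc1 (hlam.trans hc) univ hroot
end
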